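/- arXiv:1703.00041 — 4 statements merged into one kernel-verified Lean document; each statement's English description precedes it below -/
import Mathlib

section
/- Let p ≥ q ≥ s ≥ 2 with p + 1 ≤ q + s, set t = p+q-s, v = q+s-p, w = p+s-q, and fix n, m, l with 1 ≤ n ≤ p, 1 ≤ m ≤ q, 1 ≤ l ≤ s. Define φ on A ∪ B ∪ C (A = ZMod(2p) labeled a, B = ZMod(2q) labeled b, C = ZMod(2s) labeled c) by: φ(a_{n-i}) = b_{m+i-1} for 1 ≤ i ≤ t, φ(a_{n+j}) = c_{l-j-1} for 0 ≤ j ≤ w-1, φ(b_{m-h}) = c_{l+h-1} for 1 ≤ h ≤ v, extended symmetrically so that φ(b_{m+i-1}) = a_{n-i}, φ(c_{l-j-1}) = a_{n+j}, φ(c_{l+h-1}) = b_{m-h}. Then φ is a well-defined involution of A ∪ B ∪ C with no fixed points. -/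
private lemma neg_cast_val (N k : ℕ) [NeZero N] (h1 : 1 ≤ k) (h2 : k < N) :
    (-(k : ZMod N)).val = N - k := by
  have hk0 : (k : ZMod N) ≠ 0 := by
    intro h
    have := congrArg ZMod.val h
    rw [ZMod.val_cast_of_lt h2, ZMod.val_zero] at this
    omega
  rw [ZMod.neg_val, if_neg hk0, ZMod.val_cast_of_lt h2]

/-- The gluing permutation φ of a 3-butterfly: with t = p+q-s, v = q+s-p,
w = p+s-q, the rules φ(a_{n-i}) = b_{m+i-1} (1 ≤ i ≤ t),
φ(a_{n+j}) = c_{l-j-1} (0 ≤ j ≤ w-1), φ(b_{m-h}) = c_{l+h-1} (1 ≤ h ≤ v),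
extended symmetrically, give a well-defined involution of A ⊕ B ⊕ C
without fixed points. -/
theorem stmt_5 (p q s n m l : ℕ) (hpq : q ≤ p) (hqs : s ≤ q) (hs : 2 ≤ s)
    (hineq : p + 1 ≤ q + s)
    (hn1 : 1 ≤ n) (hn2 : n ≤ p) (hm1 : 1 ≤ m) (hm2 : m ≤ q)
    (hl1 : 1 ≤ l) (hl2 : l ≤ s) :
    ∃ φ : (ZMod (2 * p) ⊕ ZMod (2 * q) ⊕ ZMod (2 * s)) →
          (ZMod (2 * p) ⊕ ZMod (2 * q) ⊕ ZMod (2 * s)),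
      (∀ i : ℕ, 1 ≤ i → i ≤ p + q - s →
        φ (Sum.inl ((n : ZMod (2 * p)) - (i : ZMod (2 * p)))) =
          Sum.inr (Sum.inl ((m : ZMod (2 * q)) + (i : ZMod (2 * q)) - 1))) ∧
      (∀ j : ℕ, j ≤ p + s - q - 1 →
        φ (Sum.inl ((n : ZMod (2 * p)) + (j : ZMod (2 * p)))) =
          Sum.inr (Sum.inr ((l : ZMod (2 * s)) - (j : ZMod (2 * s)) - 1))) ∧
      (∀ h : ℕ, 1 ≤ h → h ≤ q + s - p →
        φ (Sum.inr (Sum.inl ((m : ZMod (2 * q)) - (h : ZMod (2 * q))))) =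
          Sum.inr (Sum.inr ((l : ZMod (2 * s)) + (h : ZMod (2 * s)) - 1))) ∧
      Function.Involutive φ ∧ (∀ x, φ x ≠ x) := by
  haveI : NeZero (2 * p) := ⟨by omega⟩
  haveI : NeZero (2 * q) := ⟨by omega⟩
  haveI : NeZero (2 * s) := ⟨by omega⟩
  set t := p + q - s with ht
  set v := q + s - p with hv
  set w := p + s - q with hw
  have htw : t + w = 2 * p := by omega
  have htv : t + v = 2 * q := by omega
  have hwv : w + v = 2 * s := by omega
  have hv1 : 1 ≤ v := by omega
  have hw2 : 2 ≤ w := by omega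
  have ht2 : 2 ≤ t := by omega
  refine ⟨Sum.elim
    (fun x => if (x - (n : ZMod (2*p))).val < w then
        Sum.inr (Sum.inr ((l : ZMod (2*s)) - (((x - (n : ZMod (2*p))).val : ℕ) : ZMod (2*s)) - 1))
      else
        Sum.inr (Sum.inl ((m : ZMod (2*q)) + ((2*p - (x - (n : ZMod (2*p))).val : ℕ) : ZMod (2*q)) - 1)))
    (Sum.elim
      (fun y => if (y - (m : ZMod (2*q))).val < t then
          Sum.inl ((n : ZMod (2*p)) - (((y - (m : ZMod (2*q))).val : ℕ) : ZMod (2*p)) - 1)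
        else
          Sum.inr (Sum.inr ((l : ZMod (2*s)) + ((2*q - (y - (m : ZMod (2*q))).val : ℕ) : ZMod (2*s)) - 1)))
      (fun z => if (z - (l : ZMod (2*s))).val < v then
          Sum.inr (Sum.inl ((m : ZMod (2*q)) - (((z - (l : ZMod (2*s))).val : ℕ) : ZMod (2*q)) - 1))
        else
          Sum.inl ((n : ZMod (2*p)) + ((2*s - 1 - (z - (l : ZMod (2*s))).val : ℕ) : ZMod (2*p))))),
    ?_, ?_, ?_, ?_, ?_⟩
  · -- rule 1
    intro i hi1 hi2
    have hiv : ((n : ZMod (2*p)) - (i : ZMod (2*p)) - (n : ZMod (2*p))).val = 2*p - i := by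
      rw [sub_sub_cancel_left, neg_cast_val _ _ hi1 (by omega)]
    simp only [Sum.elim_inl, hiv]
    rw [if_neg (by omega)]
    have : (2*p - (2*p - i)) = i := by omega
    rw [this]
  · -- rule 2
    intro j hj
    have hjv : ((n : ZMod (2*p)) + (j : ZMod (2*p)) - (n : ZMod (2*p))).val = j := by
      rw [add_sub_cancel_left, ZMod.val_cast_of_lt (by omega)]
    simp only [Sum.elim_inl, hjv]
    rw [if_pos (by omega)]
  · -- rule 3
    intro h h1 h2
    have hhv : ((m : ZMod (2*q)) - (h : ZMod (2*q)) - (m : ZMod (2*q))).val = 2*q - h := by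
      rw [sub_sub_cancel_left, neg_cast_val _ _ h1 (by omega)]
    simp only [Sum.elim_inr, Sum.elim_inl, hhv]
    rw [if_neg (by omega)]
    have : (2*q - (2*q - h)) = h := by omega
    rw [this]
  · -- involutive
    intro x
    rcases x with x | y | z
    · simp only [Sum.elim_inl]
      set d := (x - (n : ZMod (2*p))).val with hd
      have hdlt : d < 2*p := ZMod.val_lt _
      have hx : x = (n : ZMod (2*p)) + (d : ZMod (2*p)) := by
        rw [hd, ZMod.natCast_zmod_val]; ring
      by_cases hcase : d < w
      · rw [if_pos hcase]
        simp only [Sum.elim_inr]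
        have key : ((l : ZMod (2*s)) - (d : ZMod (2*s)) - 1 - (l : ZMod (2*s))).val
            = 2*s - (d + 1) := by
          have : (l : ZMod (2*s)) - (d : ZMod (2*s)) - 1 - (l : ZMod (2*s))
              = -(((d+1 : ℕ)) : ZMod (2*s)) := by push_cast; ring
          rw [this, neg_cast_val _ _ (by omega) (by omega)]
        rw [key, if_neg (by omega)]
        have h1 : 2*s - 1 - (2*s - (d+1)) = d := by omega
        rw [h1, ← hx]
      · rw [if_neg hcase]
        simp only [Sum.elim_inr, Sum.elim_inl]
        have key : ((m : ZMod (2*q)) + ((2*p - d : ℕ) : ZMod (2*q)) - 1 - (m : ZMod (2*q))).val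
            = 2*p - d - 1 := by
          have : (m : ZMod (2*q)) + ((2*p - d : ℕ) : ZMod (2*q)) - 1 - (m : ZMod (2*q))
              = ((2*p - d - 1 : ℕ) : ZMod (2*q)) := by
            have h2 : (2*p - d : ℕ) = (2*p - d - 1) + 1 := by omega
            rw [h2]; push_cast; ring
          rw [this, ZMod.val_cast_of_lt (by omega)]
        rw [key, if_pos (by omega)]
        have h3 : ((n : ZMod (2*p)) - ((2*p - d - 1 : ℕ) : ZMod (2*p)) - 1) = x := by
          rw [hx]
          have hzero : ((2*p - d - 1 : ℕ) : ZMod (2*p)) + 1 + (d : ZMod (2*p)) = 0 := by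
            have hc : ((2*p - d - 1 : ℕ) : ZMod (2*p)) + 1 + (d : ZMod (2*p))
                = ((2*p - d - 1 + 1 + d : ℕ) : ZMod (2*p)) := by push_cast; ring
            rw [hc]
            have h5 : 2*p - d - 1 + 1 + d = 2*p := by omega
            rw [h5]; exact ZMod.natCast_self _
          linear_combination -hzero
        rw [h3]
    · simp only [Sum.elim_inr, Sum.elim_inl]
      set e := (y - (m : ZMod (2*q))).val with he
      have helt : e < 2*q := ZMod.val_lt _
      have hy : y = (m : ZMod (2*q)) + (e : ZMod (2*q)) := by
        rw [he, ZMod.natCast_zmod_val]; ring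
      by_cases hcase : e < t
      · rw [if_pos hcase]
        simp only [Sum.elim_inl]
        have key : ((n : ZMod (2*p)) - (e : ZMod (2*p)) - 1 - (n : ZMod (2*p))).val
            = 2*p - (e + 1) := by
          have : (n : ZMod (2*p)) - (e : ZMod (2*p)) - 1 - (n : ZMod (2*p))
              = -(((e+1 : ℕ)) : ZMod (2*p)) := by push_cast; ring
          rw [this, neg_cast_val _ _ (by omega) (by omega)]
        rw [key, if_neg (by omega)]
        have h1 : 2*p - (2*p - (e + 1)) = e + 1 := by omega
        rw [h1, hy]
        push_cast; ring_nf
      · rw [if_neg hcase]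
        simp only [Sum.elim_inr]
        have key : ((l : ZMod (2*s)) + ((2*q - e : ℕ) : ZMod (2*s)) - 1 - (l : ZMod (2*s))).val
            = 2*q - e - 1 := by
          have : (l : ZMod (2*s)) + ((2*q - e : ℕ) : ZMod (2*s)) - 1 - (l : ZMod (2*s))
              = ((2*q - e - 1 : ℕ) : ZMod (2*s)) := by
            have h2 : (2*q - e : ℕ) = (2*q - e - 1) + 1 := by omega
            rw [h2]; push_cast; ring
          rw [this, ZMod.val_cast_of_lt (by omega)]
        rw [key, if_pos (by omega)]
        have h3 : ((m : ZMod (2*q)) - ((2*q - e - 1 : ℕ) : ZMod (2*q)) - 1) = y := by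
          rw [hy]
          have hzero : ((2*q - e - 1 : ℕ) : ZMod (2*q)) + 1 + (e : ZMod (2*q)) = 0 := by
            have hc : ((2*q - e - 1 : ℕ) : ZMod (2*q)) + 1 + (e : ZMod (2*q))
                = ((2*q - e - 1 + 1 + e : ℕ) : ZMod (2*q)) := by push_cast; ring
            rw [hc]
            have h5 : 2*q - e - 1 + 1 + e = 2*q := by omega
            rw [h5]; exact ZMod.natCast_self _
          linear_combination -hzero
        rw [h3]
    · simp only [Sum.elim_inr]
      set f := (z - (l : ZMod (2*s))).val with hf
      have hflt : f < 2*s := ZMod.val_lt _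
      have hz : z = (l : ZMod (2*s)) + (f : ZMod (2*s)) := by
        rw [hf, ZMod.natCast_zmod_val]; ring
      by_cases hcase : f < v
      · rw [if_pos hcase]
        simp only [Sum.elim_inr, Sum.elim_inl]
        have key : ((m : ZMod (2*q)) - (f : ZMod (2*q)) - 1 - (m : ZMod (2*q))).val
            = 2*q - (f + 1) := by
          have : (m : ZMod (2*q)) - (f : ZMod (2*q)) - 1 - (m : ZMod (2*q))
              = -(((f+1 : ℕ)) : ZMod (2*q)) := by push_cast; ring
          rw [this, neg_cast_val _ _ (by omega) (by omega)]
        rw [key, if_neg (by omega)]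
        have h1 : 2*q - (2*q - (f + 1)) = f + 1 := by omega
        rw [h1, hz]
        push_cast; ring_nf
      · rw [if_neg hcase]
        simp only [Sum.elim_inl]
        have key : ((n : ZMod (2*p)) + ((2*s - 1 - f : ℕ) : ZMod (2*p)) - (n : ZMod (2*p))).val
            = 2*s - 1 - f := by
          rw [add_sub_cancel_left, ZMod.val_cast_of_lt (by omega)]
        rw [key, if_pos (by omega)]
        have h3 : ((l : ZMod (2*s)) - ((2*s - 1 - f : ℕ) : ZMod (2*s)) - 1) = z := by
          rw [hz]
          have hzero : ((2*s - 1 - f : ℕ) : ZMod (2*s)) + 1 + (f : ZMod (2*s)) = 0 := by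
            have hc : ((2*s - 1 - f : ℕ) : ZMod (2*s)) + 1 + (f : ZMod (2*s))
                = ((2*s - 1 - f + 1 + f : ℕ) : ZMod (2*s)) := by push_cast; ring
            rw [hc]
            have h5 : 2*s - 1 - f + 1 + f = 2*s := by omega
            rw [h5]; exact ZMod.natCast_self _
          linear_combination -hzero
        rw [h3]
  · -- no fixed points
    intro x
    rcases x with x | y | z
    · simp only [Sum.elim_inl]
      split <;> simp
    · simp only [Sum.elim_inr, Sum.elim_inl]
      split <;> simp
    · simp only [Sum.elim_inr]
      split <;> simp
end

section
/- Let X be a finite set, γ : X → X an involution, φ : X → X a fixed-point-free involution, and μ = φγ. Suppose τ is a cycle of μ containing an element I fixed by γ (γ(I) = I), and suppose τ contains exactly two fixed points of γ, say I and F. Then the length of τ is even, and μ^{|τ|/2}(I) = F. -/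
/-- If μ = φγ with γ an involution and φ a fixed-point-free involution on a
finite set, and the cycle (orbit) of μ through a γ-fixed point I contains
exactly two fixed points of γ, namely I and F, then the cycle has even length
and μ^{|τ|/2}(I) = F. -/
theorem stmt_8 {X : Type*} [Fintype X] (γ φ : Equiv.Perm X)
    (hγ : γ * γ = 1) (hφ : φ * φ = 1) (hφfp : ∀ x, φ x ≠ x)
    (I F : X) (hI : γ I = I) (hF : γ F = F) (hIF : I ≠ F)
    (hsame : (φ * γ).SameCycle I F)
    (honly : ∀ y, (φ * γ).SameCycle I y → γ y = y → y = I ∨ y = F) :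
    Even ({y | (φ * γ).SameCycle I y}.ncard) ∧
    ((φ * γ) ^ ({y | (φ * γ).SameCycle I y}.ncard / 2)) I = F := by
  classical
  set μ := φ * γ with hμ
  -- γ conjugates μ to μ⁻¹
  have hγinv : γ⁻¹ = γ := inv_eq_of_mul_eq_one_right hγ
  have hφinv : φ⁻¹ = φ := inv_eq_of_mul_eq_one_right hφ
  have hconj : γ * μ * γ⁻¹ = μ⁻¹ := by
    rw [hγinv, hμ, mul_inv_rev, hγinv, hφinv, ← mul_assoc γ φ γ,
      mul_assoc (γ * φ) γ γ, hγ, mul_one]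
  have hconjpow : ∀ k : ℕ, γ ((μ ^ k) I) = ((μ⁻¹) ^ k) I := by
    intro k
    have : γ * μ ^ k * γ⁻¹ = (μ⁻¹) ^ k := by
      rw [← hconj, conj_pow]
    have h2 := congrArg (fun p : Equiv.Perm X => p I) this
    simp only [Equiv.Perm.mul_apply, hγinv] at h2
    rw [hI] at h2
    exact h2
  -- I is in the support of μ
  have hμI : μ I ≠ I := by
    intro h
    apply hφfp I
    have : μ I = φ I := by simp [hμ, Equiv.Perm.mul_apply, hI]
    rw [← this, h]
  have hIsupp : I ∈ μ.support := Equiv.Perm.mem_support.2 hμI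
  have hImem : I ∈ (μ.cycleOf I).support :=
    Equiv.Perm.mem_support_cycleOf_iff.2 ⟨Equiv.Perm.SameCycle.refl μ I, hIsupp⟩
  have hFmem : F ∈ (μ.cycleOf I).support :=
    Equiv.Perm.mem_support_cycleOf_iff.2 ⟨hsame, hIsupp⟩
  have hcyc : μ.IsCycleOn ((μ.cycleOf I).support : Set X) :=
    μ.isCycleOn_support_cycleOf I
  -- identify the set with the support of the cycle
  have hsetS : {y | μ.SameCycle I y} = ((μ.cycleOf I).support : Set X) := by
    ext y
    simp only [Set.mem_setOf_eq, Finset.coe_sort_coe, Finset.mem_coe,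
      Equiv.Perm.mem_support_cycleOf_iff]
    exact ⟨fun h => ⟨h, hIsupp⟩, fun h => h.1⟩
  have hn : {y | μ.SameCycle I y}.ncard = (μ.cycleOf I).support.card := by
    rw [hsetS, Set.ncard_coe_finset]
  set n := (μ.cycleOf I).support.card with hndef
  -- get k < n with μ^k I = F
  obtain ⟨k, hk, hkF⟩ := hcyc.exists_pow_eq hImem hFmem
  have hk0 : k ≠ 0 := by
    intro h; subst h; simp at hkF; exact hIF hkF
  -- μ^(2k) I = I
  have h2k : (μ ^ (2 * k)) I = I := by
    have h1 : γ ((μ ^ k) I) = ((μ⁻¹) ^ k) I := hconjpow k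
    rw [hkF, hF] at h1
    have h2 : (μ ^ k) F = (μ ^ k) (((μ⁻¹) ^ k) I) := by rw [← h1]
    have h3 : (μ ^ k) (((μ⁻¹) ^ k) I) = I := by
      have : μ ^ k * (μ⁻¹) ^ k = 1 := by group
      have := congrArg (fun p : Equiv.Perm X => p I) this
      simpa using this
    rw [h3] at h2
    rw [two_mul, pow_add]
    simp only [Equiv.Perm.mul_apply]
    rw [hkF, h2]
  have hdvd : n ∣ 2 * k := (hcyc.pow_apply_eq hImem).1 h2k
  have hkpos : 0 < k := Nat.pos_of_ne_zero hk0
  have hkn : k < n := hk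
  have hle : n ≤ 2 * k := Nat.le_of_dvd (by omega) hdvd
  have hdvd' : n ∣ (2 * k - n) := Nat.dvd_sub hdvd dvd_rfl
  have hzero : 2 * k - n = 0 := Nat.eq_zero_of_dvd_of_lt hdvd' (by omega) |>.symm ▸ rfl
  have hn2k : n = 2 * k := by omega
  rw [hn, hn2k]
  constructor
  · exact ⟨k, by ring⟩
  · have : 2 * k / 2 = k := by omega
    rw [this, hkF]
end

section
/- Let X be a finite set, γ an involution on X, φ a fixed-point-free involution on X, and μ = φγ. Let τ be a cycle of μ containing two distinct fixed points I, F of γ such that the partial orbit from I to F is I, z_1, ..., z_k, F with z_j not fixed by γ and k ≥ 1. Then the remainder of the cycle is γ(z_k), γ(z_{k-1}), ..., γ(z_1); that is, μ(F) = γ(z_k) and μ(γ(z_j)) = γ(z_{j-1}) for 2 ≤ j ≤ k, and μ(γ(z_1)) = I. -/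
/-- Palindromic cycle structure: if the partial μ-orbit from a γ-fixed point I
to a γ-fixed point F is I, z₁, ..., z_k, F with no z_j fixed by γ, then the
remainder of the cycle is γ(z_k), ..., γ(z₁): μ(F) = γ(z_k),
μ(γ(z_j)) = γ(z_{j-1}) for 2 ≤ j ≤ k, and μ(γ(z₁)) = I. -/
theorem stmt_9 {X : Type*} [Finite X] (γ φ : Equiv.Perm X)
    (hγ : γ * γ = 1) (hφ : φ * φ = 1) (hφfp : ∀ x, φ x ≠ x)
    (I F : X) (hI : γ I = I) (hF : γ F = F) (hIF : I ≠ F)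
    (k : ℕ) (hk : 1 ≤ k) (z : ℕ → X)
    (hz : ∀ j, 1 ≤ j → j ≤ k → γ (z j) ≠ z j)
    (h0 : (φ * γ) I = z 1)
    (hstep : ∀ j, 1 ≤ j → j < k → (φ * γ) (z j) = z (j + 1))
    (hend : (φ * γ) (z k) = F) :
    (φ * γ) F = γ (z k) ∧
    (∀ j, 2 ≤ j → j ≤ k → (φ * γ) (γ (z j)) = γ (z (j - 1))) ∧
    (φ * γ) (γ (z 1)) = I := by
  have hγ2 : ∀ x, γ (γ x) = x := fun x => by
    have := congrArg (fun f : Equiv.Perm X => f x) hγ; simpa using this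
  have hφ2 : ∀ x, φ (φ x) = x := fun x => by
    have := congrArg (fun f : Equiv.Perm X => f x) hφ; simpa using this
  -- μ(γ y) = φ y
  have key : ∀ y, (φ * γ) (γ y) = φ y := fun y => by
    simp [Equiv.Perm.mul_apply, hγ2]
  refine ⟨?_, ?_, ?_⟩
  · have h1 : φ (γ (z k)) = F := hend
    have h2 : φ F = γ (z k) := by rw [← h1, hφ2]
    calc (φ * γ) F = φ F := by simp [Equiv.Perm.mul_apply, hF]
      _ = γ (z k) := h2
  · intro j h2j hjk
    have hj1 : 1 ≤ j - 1 := by omega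
    have hj2 : j - 1 < k := by omega
    have h1 : φ (γ (z (j - 1))) = z ((j - 1) + 1) := hstep (j - 1) hj1 hj2
    have hj : (j - 1) + 1 = j := by omega
    rw [hj] at h1
    rw [key, ← h1, hφ2]
  · have h1 : φ I = z 1 := by
      have := h0; simpa [Equiv.Perm.mul_apply, hI] using this
    rw [key, ← h1, hφ2]
end

section
/- Let X be a finite set, γ an involution on X with fixed-point set E, φ a fixed-point-free involution on X, and μ = φγ. Then every cycle of μ contains an even number of elements of E (counting 0 as even). -/
/-- Every cycle of μ = φγ contains an even number of fixed points of γ,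
where γ is an involution and φ a fixed-point-free involution of a finite
set. -/
theorem stmt_10 {X : Type*} [Fintype X] (γ φ : Equiv.Perm X)
    (hγ : γ * γ = 1) (hφ : φ * φ = 1) (hφfp : ∀ x, φ x ≠ x) :
    ∀ x : X, Even ({e : X | γ e = e ∧ (φ * γ).SameCycle x e}.ncard) := by
  intro x
  set μ : Equiv.Perm X := φ * γ with hμ
  set S : Set X := {e : X | γ e = e ∧ μ.SameCycle x e} with hSdef
  rcases Set.eq_empty_or_nonempty S with hS | ⟨e, heS⟩
  · rw [hS]; simp
  obtain ⟨heγ, hexe⟩ := heS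
  have hγinv : γ⁻¹ = γ := by rw [inv_eq_iff_mul_eq_one]; exact hγ
  have hφinv : φ⁻¹ = φ := by rw [inv_eq_iff_mul_eq_one]; exact hφ
  have hμinv : μ⁻¹ = γ * φ := by rw [hμ, mul_inv_rev, hγinv, hφinv]
  have hconj : ∀ k : ℕ, γ * μ ^ k = (μ ^ k)⁻¹ * γ := by
    intro k
    induction k with
    | zero => simp
    | succ k ih =>
      have h1 : γ * μ = μ⁻¹ * γ := by rw [hμ, hμinv, mul_assoc]
      rw [pow_succ, ← mul_assoc, ih, mul_assoc, h1, ← mul_assoc, ← inv_pow,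
        ← pow_succ, inv_pow, pow_succ]
  -- pointwise: γ (μ^k e) = (μ^k)⁻¹ e
  have hkey : ∀ k : ℕ, γ ((μ ^ k) e) = ((μ ^ k)⁻¹) e := by
    intro k
    have := congrArg (fun g : Equiv.Perm X => g e) (hconj k)
    simp only [Equiv.Perm.mul_apply] at this
    rw [this, heγ]
  -- minimal period of e under μ
  set n : ℕ := Function.minimalPeriod (⇑μ) e with hndef
  have hord : Function.IsPeriodicPt (⇑μ) (orderOf μ) e := by
    unfold Function.IsPeriodicPt Function.IsFixedPt
    rw [Equiv.Perm.iterate_eq_pow, pow_orderOf_eq_one]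
    simp
  have hn : 0 < n := hord.minimalPeriod_pos (orderOf_pos μ)
  have hper : (μ ^ n) e = e := by
    have := Function.isPeriodicPt_minimalPeriod (⇑μ) e
    rwa [Function.IsPeriodicPt, Function.IsFixedPt, Equiv.Perm.iterate_eq_pow] at this
  have hdvd : ∀ k : ℕ, (μ ^ k) e = e → n ∣ k := by
    intro k hk
    apply Function.IsPeriodicPt.minimalPeriod_dvd
    rwa [Function.IsPeriodicPt, Function.IsFixedPt, Equiv.Perm.iterate_eq_pow]
  -- n is even, otherwise φ has a fixed point
  have hneven : Even n := by
    by_contra hodd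
    rw [Nat.not_even_iff_odd] at hodd
    set j : ℕ := (n + 1) / 2 with hjdef
    have h2j : 2 * j = n + 1 := by obtain ⟨m, hm⟩ := hodd; omega
    have hφeq : φ = μ * γ := by rw [hμ, mul_assoc, hγ, mul_one]
    have hφe : φ ((μ ^ j) e) = (μ ^ j) e := by
      rw [hφeq, Equiv.Perm.mul_apply, hkey j]
      have h1 : ((μ ^ j)⁻¹) e = (μ ^ (j - 1)) e := by
        rw [Equiv.Perm.inv_eq_iff_eq, ← Equiv.Perm.mul_apply, ← pow_add]
        have : j + (j - 1) = n := by omega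
        rw [this, hper]
      rw [h1, ← Equiv.Perm.mul_apply, ← pow_succ']
      congr 2
      omega
    exact hφfp _ hφe
  obtain ⟨m, hm⟩ := hneven
  have hm' : n = 2 * m := by omega
  have hmpos : 0 < m := by omega
  set e' : X := (μ ^ m) e with he'def
  -- e' is also in S
  have he'γ : γ e' = e' := by
    rw [he'def, hkey m, Equiv.Perm.inv_eq_iff_eq, ← Equiv.Perm.mul_apply, ← pow_add]
    have : m + m = n := by omega
    rw [this, hper]
  have hee' : μ.SameCycle e e' := ⟨(m : ℤ), by rw [zpow_natCast]⟩
  have he'S : e' ∈ S := ⟨he'γ, hexe.trans hee'⟩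
  have hne : e ≠ e' := by
    intro h
    have : n ∣ m := hdvd m h.symm
    have := Nat.le_of_dvd hmpos this
    omega
  -- S = {e, e'}
  have hSeq : S = {e, e'} := by
    apply Set.eq_of_subset_of_subset
    · rintro y ⟨hyγ, hxy⟩
      obtain ⟨k, hklt, hk⟩ := ((hexe.symm.trans hxy)).exists_pow_eq'
      -- γ y = y with y = μ^k e gives μ^(2k) e = e
      have h2k : (μ ^ (2 * k)) e = e := by
        have : γ ((μ ^ k) e) = (μ ^ k) e := by rw [hk, hyγ]
        rw [hkey k, Equiv.Perm.inv_eq_iff_eq] at this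
        rw [two_mul, pow_add, Equiv.Perm.mul_apply, ← this]
      have hndvd : n ∣ 2 * k := hdvd _ h2k
      rw [hm'] at hndvd
      have hmk : m ∣ k := (mul_dvd_mul_iff_left (by norm_num : (2:ℕ) ≠ 0)).mp hndvd
      obtain ⟨t, ht⟩ := hmk
      have hfixpow : ∀ s : ℕ, ((μ ^ n) ^ s) e = e := by
        intro s
        induction s with
        | zero => simp
        | succ s ih => rw [pow_succ, Equiv.Perm.mul_apply, hper, ih]
      rcases Nat.even_or_odd t with hte | hto
      · obtain ⟨s, hs⟩ := hte
        left
        have hkeq : k = n * s := by rw [ht, hs, hm']; ring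
        rw [← hk, hkeq, pow_mul, hfixpow]
      · obtain ⟨s, hs⟩ := hto
        right
        have hkeq : k = m + n * s := by rw [ht, hs, hm']; ring
        rw [← hk, hkeq, pow_add, Equiv.Perm.mul_apply, pow_mul, hfixpow, he'def]
        exact rfl
    · rintro y (rfl | rfl)
      · exact ⟨heγ, hexe⟩
      · exact he'S
  rw [hSeq, Set.ncard_pair hne]
  exact ⟨1, rfl⟩
end
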